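/- Fix (ξ,η) ∈ ℂ² and let J act on tangent vectors by J(u,v) = (iu, iv). Then for all tangent vectors p, p' ∈ ℂ²: (i) ω_{(ξ,η)}(J p, J p') = ω_{(ξ,η)}(p, p') (the symplectic form is compatible with the complex structure); (ii) the bilinear form g(p,p') := ω_{(ξ,η)}(J p, p') is symmetric; and (iii) g(p,p) = 2·q_{(ξ,η)}(p), i.e. the symmetric form obtained from ω and J is (twice) the neutral Kähler metric. -/

import Mathlib

open Complex ComplexConjugate

/-- The symplectic form on the space `𝕋 ≅ ℂ²` of oriented lines, evaluated at the
point `(ξ,η)` on the pair of tangent vectors `p₁ = (u₁,v₁)`, `p₂ = (u₂,v₂)`. -/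
noncomputable def omegaT (ξ η : ℂ) (p₁ p₂ : ℂ × ℂ) : ℝ :=
  2 * ((2 / ((1 + normSq ξ : ℝ) : ℂ) ^ 2) * (p₁.2 * conj p₂.1 - p₂.2 * conj p₁.1) -
    (4 * conj ξ * η / ((1 + normSq ξ : ℝ) : ℂ) ^ 3) *
      (p₁.1 * conj p₂.1 - p₂.1 * conj p₁.1)).re

/-- The complex structure `J` acting on tangent vectors `(u,v) ∈ ℂ²`. -/
def Jmap (p : ℂ × ℂ) : ℂ × ℂ := (Complex.I * p.1, Complex.I * p.2)

/-- The neutral Kähler metric on the space `𝕋 ≅ ℂ²` of oriented lines, as a real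
quadratic form on the tangent vector `(u,v)` at the point `(ξ,η)`. -/
noncomputable def q (ξ η : ℂ) (p : ℂ × ℂ) : ℝ :=
  -4 * (p.2 * conj p.1).im / (1 + normSq ξ) ^ 2 -
    8 * (ξ * conj η).im * normSq p.1 / (1 + normSq ξ) ^ 3

/-!
Both `ω(Jp, Jp')` and `ω(p, p')` are real parts of a fixed combination of the products
`x · conj y` of a component `x` of one vector with a component `y` of the other, and each such
product is unchanged when `x` and `y` are both multiplied by `i`. Applying `J` to one argument
only turns each antisymmetric combination `x conj y - y conj x` into `i (x conj y + y conj x)`,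
which is why `ω(Jp, p')` is symmetric; on the diagonal these become
`2 v ū` and `2 |u|²`, and the result is the metric `q`.
-/

noncomputable def skewForm (a b : ℂ) (p₁ p₂ : ℂ × ℂ) : ℝ :=
  2 * (a * (p₁.2 * conj p₂.1 - p₂.2 * conj p₁.1) - b * (p₁.1 * conj p₂.1 - p₂.1 * conj p₁.1)).re

lemma omegaT_eq_skewForm (ξ η : ℂ) :
    omegaT ξ η = skewForm (2 / ((1 + normSq ξ : ℝ) : ℂ) ^ 2)
      (4 * conj ξ * η / ((1 + normSq ξ : ℝ) : ℂ) ^ 3) := rfl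

lemma I_mul_mul_conj_I_mul (z w : ℂ) : I * z * conj (I * w) = z * conj w := by
  rw [map_mul, conj_I]
  linear_combination (-(z * conj w)) * I_sq

lemma skewForm_Jmap_Jmap (a b : ℂ) (p₁ p₂ : ℂ × ℂ) :
    skewForm a b (Jmap p₁) (Jmap p₂) = skewForm a b p₁ p₂ := by
  simp only [skewForm, Jmap, I_mul_mul_conj_I_mul]

lemma skewForm_Jmap_left (a b : ℂ) (p₁ p₂ : ℂ × ℂ) :
    skewForm a b (Jmap p₁) p₂ =
      2 * (I * (a * (p₁.2 * conj p₂.1 + p₂.2 * conj p₁.1) -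
        b * (p₁.1 * conj p₂.1 + p₂.1 * conj p₁.1))).re := by
  simp only [skewForm, Jmap, map_mul, conj_I]
  ring_nf

lemma skewForm_Jmap_left_comm (a b : ℂ) (p₁ p₂ : ℂ × ℂ) :
    skewForm a b (Jmap p₁) p₂ = skewForm a b (Jmap p₂) p₁ := by
  simp only [skewForm_Jmap_left, add_comm]

lemma skewForm_Jmap_self (a b : ℂ) (p : ℂ × ℂ) :
    skewForm a b (Jmap p) p = -4 * (a * (p.2 * conj p.1)).im + 4 * b.im * normSq p.1 := by
  rw [skewForm_Jmap_left, mul_conj, ← ofReal_add, I_mul_re, sub_im, im_mul_ofReal, mul_add, add_im]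
  ring

lemma omegaT_Jmap_self (ξ η : ℂ) (p : ℂ × ℂ) : omegaT ξ η (Jmap p) p = 2 * q ξ η p := by
  set N : ℝ := 1 + normSq ξ
  have ha : 2 / (N : ℂ) ^ 2 = ((2 / N ^ 2 : ℝ) : ℂ) := by push_cast; rfl
  have hb : 4 * conj ξ * η / (N : ℂ) ^ 3 = ((4 / N ^ 3 : ℝ) : ℂ) * conj (ξ * conj η) := by
    push_cast
    rw [map_mul, conj_conj]
    ring
  rw [omegaT_eq_skewForm, ha, hb, skewForm_Jmap_self, q, im_ofReal_mul, im_ofReal_mul, conj_im]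
  ring

/-- the symplectic form `ω` is compatible with the complex structure
`J`, the bilinear form `g(p,p') = ω(Jp,p')` is symmetric, and `g(p,p) = 2·q(p)`. -/
theorem kaehler_compatibility (ξ η : ℂ) :
    (∀ p p' : ℂ × ℂ, omegaT ξ η (Jmap p) (Jmap p') = omegaT ξ η p p') ∧
    (∀ p p' : ℂ × ℂ, omegaT ξ η (Jmap p) p' = omegaT ξ η (Jmap p') p) ∧
    (∀ p : ℂ × ℂ, omegaT ξ η (Jmap p) p = 2 * q ξ η p) := by
  refine ⟨fun p p' => ?_, fun p p' => ?_, omegaT_Jmap_self ξ η⟩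
  · rw [omegaT_eq_skewForm, skewForm_Jmap_Jmap]
  · rw [omegaT_eq_skewForm, skewForm_Jmap_left_comm]
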